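/- If X is a CW space and A a subcomplex, then cat(X/A) − 1 ≤ cat(X). -/

import Mathlib

open scoped unitInterval Topology

/-- A subset `A` of `X` is contractible in `X` if its inclusion is nullhomotopic. -/
def ContractibleIn {X : Type} [TopologicalSpace X] (A : Set X) : Prop :=
  ContinuousMap.Nullhomotopic ((⟨Subtype.val, continuous_subtype_val⟩ : C(A, X)))

/-- `LSCatLE X n` : `X` admits an open cover by `n+1` sets, each contractible in `X`. -/
def LSCatLE (X : Type) [TopologicalSpace X] (n : ℕ) : Prop :=
  ∃ U : Fin (n + 1) → Set X, (∀ i, IsOpen (U i)) ∧ (⋃ i, U i) = Set.univ ∧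
    ∀ i, ContractibleIn (U i)

/-- The (normalized) Lusternik–Schnirelmann category of `X`, valued in `ℕ∞`. -/
noncomputable def LSCat (X : Type) [TopologicalSpace X] : ℕ∞ :=
  sInf {c : ℕ∞ | ∃ n : ℕ, c = n ∧ LSCatLE X n}

/-- The LS category of a subspace `A` of `Z`, computed with covers by sets that are
open in `A` (as a subspace) and contractible in the ambient space `Z`. -/
def SubLSCatLE (Z : Type) [TopologicalSpace Z] (A : Set Z) (n : ℕ) : Prop :=
  ∃ U : Fin (n + 1) → Set Z, (∀ i, ∃ V : Set Z, IsOpen V ∧ U i = V ∩ A) ∧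
    (⋃ i, U i) = A ∧ ∀ i, ContractibleIn (U i)

noncomputable def SubLSCat (Z : Type) [TopologicalSpace Z] (A : Set Z) : ℕ∞ :=
  sInf {c : ℕ∞ | ∃ n : ℕ, c = n ∧ SubLSCatLE Z A n}
open scoped unitInterval Topology Topology.Homotopy

universe u

namespace RelativeCWComplex

/-- The `n`-sphere, as in the older Mathlib's `Mathlib/Topology/CWComplex.lean`. -/
noncomputable def sphere (n : ℤ) : TopCat.{u} :=
  TopCat.of <| ULift <| Metric.sphere (0 : EuclideanSpace ℝ <| Fin <| Int.toNat <| n + 1) 1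

/-- The `n`-disk, as in the older Mathlib. -/
noncomputable def disk (n : ℤ) : TopCat.{u} :=
  TopCat.of <| ULift <| Metric.closedBall (0 : EuclideanSpace ℝ <| Fin <| Int.toNat n) 1

/-- The inclusion map from the `n`-sphere to the `(n + 1)`-disk. -/
def sphereInclusion (n : ℤ) : sphere.{u} n ⟶ disk.{u} (n + 1) :=
  TopCat.ofHom ⟨fun x => ⟨⟨x.down.1, le_of_eq x.down.2⟩⟩, by fun_prop⟩

/-- Data for attaching generalized cells along `f`. -/
structure AttachGeneralizedCells {S D : TopCat.{u}} (f : S ⟶ D) (X X' : TopCat.{u}) where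
  cells : Type u
  attachMaps : cells → (S ⟶ X)
  iso_pushout : X' ≅ CategoryTheory.Limits.pushout (CategoryTheory.Limits.Sigma.desc attachMaps)
    (CategoryTheory.Limits.Sigma.map fun (_ : cells) ↦ f)

/-- Attaching `(n + 1)`-cells. -/
def AttachCells (n : ℤ) := AttachGeneralizedCells (sphereInclusion.{u} n)

end RelativeCWComplex

/-- A relative CW complex (older Mathlib definition). -/
structure RelativeCWComplex where
  sk : ℕ → TopCat.{u}
  attachCells (n : ℕ) : RelativeCWComplex.AttachCells.{u} ((n : ℤ) - 1) (sk n) (sk (n + 1))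

/-- A CW complex (older Mathlib definition). -/
structure CWComplex extends RelativeCWComplex.{u} where
  isEmpty_sk_zero : IsEmpty (sk 0)

namespace RelativeCWComplex

/-- The inclusion of a skeleton into the next one. -/
noncomputable abbrev skInclusion (X : RelativeCWComplex.{u}) (n : ℕ) : X.sk n ⟶ X.sk (n + 1) :=
  CategoryTheory.CategoryStruct.comp (CategoryTheory.Limits.pushout.inl _ _)
    (X.attachCells n).iso_pushout.inv

/-- The topological space of a relative CW complex. -/
noncomputable def toTopCat (X : RelativeCWComplex.{u}) : TopCat.{u} :=
  CategoryTheory.Limits.colimit (CategoryTheory.Functor.ofSequence (skInclusion X))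

end RelativeCWComplex

/-- `X` is a CW space: it is homeomorphic to (the realization of) a CW complex. -/
def IsCWSpace (X : Type) [TopologicalSpace X] : Prop :=
  ∃ C : CWComplex.{0}, Nonempty ((RelativeCWComplex.toTopCat C.toRelativeCWComplex) ≃ₜ X)

/-- `X` is a CW space of dimension at most `n`. -/
def IsCWSpaceOfDimLE (X : Type) [TopologicalSpace X] (n : ℕ) : Prop :=
  ∃ C : CWComplex.{0}, Nonempty ((RelativeCWComplex.toTopCat C.toRelativeCWComplex) ≃ₜ X) ∧
    ∀ m : ℕ, n + 1 ≤ m → IsEmpty (C.attachCells m).cells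

/-- The homotopy extension property for the pair `(X, A)`. -/
def HEP {X : Type} [TopologicalSpace X] (A : Set X) : Prop :=
  ∀ (Z : Type) [TopologicalSpace Z] (f : C(X, Z)) (G : C(A × I, Z)),
    (∀ a : A, G (a, 0) = f a) →
    ∃ F : C(X × I, Z), (∀ x, F (x, 0) = f x) ∧ ∀ (a : A) (t : I), F (a, t) = G (a, t)

/-- `A` is (equivalent to) a subcomplex of the CW space `X`: both are CW spaces,
`A` is closed in `X` and the inclusion `A ↪ X` is a cofibration. -/
def IsCWSubcomplex (X : Type) [TopologicalSpace X] (A : Set X) : Prop :=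
  IsCWSpace X ∧ IsCWSpace A ∧ IsClosed A ∧ HEP A

/-- The quotient `X/A` collapsing `A ⊆ X` to a point. -/
def Collapse (X : Type) [TopologicalSpace X] (A : Set X) : Type :=
  Quot (fun a b : X => a ∈ A ∧ b ∈ A)

instance (X : Type) [TopologicalSpace X] (A : Set X) : TopologicalSpace (Collapse X A) :=
  inferInstanceAs (TopologicalSpace (Quot _))

/-- The quotient map `X → X/A`. -/
def collapseMap (X : Type) [TopologicalSpace X] (A : Set X) : C(X, Collapse X A) :=
  ⟨Quot.mk _, continuous_quot_mk⟩

/-- The wedge `X ∨ Y` of two pointed spaces. -/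
def Wedge (X Y : Type) [TopologicalSpace X] [TopologicalSpace Y] (x₀ : X) (y₀ : Y) : Type :=
  Quot (fun a b : X ⊕ Y => a = Sum.inl x₀ ∧ b = Sum.inr y₀)

instance (X Y : Type) [TopologicalSpace X] [TopologicalSpace Y] (x₀ : X) (y₀ : Y) :
    TopologicalSpace (Wedge X Y x₀ y₀) :=
  inferInstanceAs (TopologicalSpace (Quot _))

/-- The image of a generalized loop under a continuous map. -/
def GenLoop.push {N X Y : Type} [TopologicalSpace X] [TopologicalSpace Y] {x : X}
    (f : C(X, Y)) (p : Ω^ N X x) : Ω^ N Y (f x) :=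
  ⟨f.comp p.1, fun y hy => by
    simp only [ContinuousMap.comp_apply]
    rw [p.2 y hy]⟩

/-- The map induced by `f : C(X, Y)` on homotopy groups. -/
def HomotopyGroup.map {N X Y : Type} [TopologicalSpace X] [TopologicalSpace Y]
    (f : C(X, Y)) (x : X) : HomotopyGroup N X x → HomotopyGroup N Y (f x) :=
  Quotient.map (GenLoop.push f)
    (fun _ _ h => h.map fun H => H.compContinuousMap f)

/-- `A` is `m`-connected: nonempty and `π_i(A) = 0` for all `i ≤ m`. -/
def IsMConnected (A : Type) [TopologicalSpace A] (m : ℕ) : Prop :=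
  Nonempty A ∧ ∀ i ≤ m, ∀ a : A, Subsingleton (HomotopyGroup (Fin i) A a)

/-! The cover of `X/A` consists of the images of the sets `Uᵢ \ A` of a categorical cover of `X`,
on which the quotient map is injective, together with the image of an open neighbourhood `N` of
`A` that deforms into `A` relative to `A`; such an `N` exists because `A ↪ X` has the homotopy
extension property. The null-homotopies upstairs descend to `X/A`, since the quotient map
restricted to a saturated open set is again a quotient map and `I` is locally compact. -/

open Topology

section QuotientHomotopy

variable {X Y : Type} [TopologicalSpace X] [TopologicalSpace Y]

theorem Topology.IsQuotientMap.isOpen_image_of_saturated {q : X → Y} (hq : IsQuotientMap q)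
    {S : Set X} (hS : IsOpen S) (hsat : q ⁻¹' (q '' S) = S) : IsOpen (q '' S) :=
  hq.isOpen_preimage.mp (hsat.symm ▸ hS)

theorem Topology.IsQuotientMap.isQuotientMap_imageFactorization {q : X → Y}
    (hq : IsQuotientMap q) {S : Set X} (hS : IsOpen S) (hsat : q ⁻¹' (q '' S) = S) :
    IsQuotientMap (S.imageFactorization q) :=
  (hq.restrictPreimage_isOpen (hq.isOpen_image_of_saturated hS hsat)).comp
    (Homeomorph.setCongr hsat.symm).isQuotientMap

theorem Topology.IsQuotientMap.contractibleIn_image {q : X → Y} (hq : IsQuotientMap q)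
    {S : Set X} (hS : IsOpen S) (hsat : q ⁻¹' (q '' S) = S) (H : C(I × S, Y)) (c : Y)
    (h0 : ∀ x, H (0, x) = q x) (h1 : ∀ x, H (1, x) = c)
    (hfib : ∀ t (x x' : S), q x = q x' → H (t, x) = H (t, x')) :
    ContractibleIn (q '' S) := by
  have hp := hq.isQuotientMap_imageFactorization hS hsat
  set lift := Function.surjInv hp.surjective
  have hlift (w : q '' S) : q (lift w) = w :=
    congrArg Subtype.val (Function.surjInv_eq hp.surjective w)
  have hG : Continuous fun p : I × q '' S ↦ H (p.1, lift p.2) :=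
    hp.continuous_lift_prod_right <| H.continuous.congr fun p ↦
      (hfib p.1 _ p.2 (hlift (S.imageFactorization q p.2))).symm
  exact ⟨c, ⟨⟨⟨_, hG⟩, fun w ↦ (h0 _).trans (hlift w), fun _ ↦ h1 _⟩⟩⟩

end QuotientHomotopy

section Collapse

variable {X : Type} [TopologicalSpace X] {A : Set X}

theorem collapseMap_eq_iff {x y : X} :
    collapseMap X A x = collapseMap X A y ↔ x = y ∨ (x ∈ A ∧ y ∈ A) := by
  have hequiv : Equivalence fun x y : X ↦ x = y ∨ (x ∈ A ∧ y ∈ A) :=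
    { refl := fun _ ↦ .inl rfl
      symm := by rintro x y (rfl | ⟨hx, hy⟩) <;> simp [*]
      trans := by rintro x y z (rfl | ⟨hx, hy⟩) (rfl | ⟨hy', hz⟩) <;> simp [*] }
  refine ⟨fun h ↦ hequiv.eqvGen_iff.mp ?_, ?_⟩
  · exact (Quot.eqvGen_exact h).mono fun _ _ ↦ .inr
  · rintro (rfl | h)
    exacts [rfl, Quot.sound h]

theorem isQuotientMap_collapseMap : IsQuotientMap (collapseMap X A) := isQuotientMap_quot_mk

theorem preimage_image_collapseMap_of_subset {S : Set X} (hAS : A ⊆ S) :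
    collapseMap X A ⁻¹' (collapseMap X A '' S) = S := by
  refine subset_antisymm ?_ (Set.subset_preimage_image _ _)
  rintro x ⟨s, hs, hsx⟩
  rcases collapseMap_eq_iff.mp hsx with rfl | ⟨-, hx⟩
  exacts [hs, hAS hx]

theorem preimage_image_collapseMap_of_disjoint {S : Set X} (hSA : Disjoint S A) :
    collapseMap X A ⁻¹' (collapseMap X A '' S) = S := by
  refine subset_antisymm ?_ (Set.subset_preimage_image _ _)
  rintro x ⟨s, hs, hsx⟩
  rcases collapseMap_eq_iff.mp hsx with rfl | ⟨hsA, -⟩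
  exacts [hs, absurd hsA (hSA.notMem_of_mem_left hs)]

theorem exists_forall_mem_collapseMap_eq [Nonempty X] :
    ∃ c, ∀ a ∈ A, collapseMap X A a = c := by
  rcases A.eq_empty_or_nonempty with rfl | ⟨a₀, ha₀⟩
  · exact ⟨collapseMap X ∅ (Classical.arbitrary X), fun _ ↦ False.elim⟩
  · exact ⟨collapseMap X A a₀, fun a ha ↦ Quot.sound ⟨ha, ha₀⟩⟩

theorem contractibleIn_collapseMap_image_diff {U : Set X} (hU : IsOpen U) (hA : IsClosed A)
    (hUc : ContractibleIn U) : ContractibleIn (collapseMap X A '' (U \ A)) := by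
  obtain ⟨y, ⟨K⟩⟩ := hUc
  let incl : C(I × ↥(U \ A), I × U) :=
    .prodMap (.id I) ⟨_, continuous_inclusion Set.sdiff_subset⟩
  refine isQuotientMap_collapseMap.contractibleIn_image (hU.sdiff hA)
    (preimage_image_collapseMap_of_disjoint Set.disjoint_sdiff_left)
    ((collapseMap X A).comp (K.toContinuousMap.comp incl)) (collapseMap X A y)
    (fun _ ↦ congrArg _ (K.apply_zero _)) (fun _ ↦ congrArg _ (K.apply_one _)) ?_
  rintro t x x' hxx'
  rcases collapseMap_eq_iff.mp hxx' with h | ⟨hx, -⟩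
  · rw [Subtype.ext h]
  · exact absurd hx x.2.2

theorem contractibleIn_collapseMap_image_of_deformation [Nonempty X] {N : Set X}
    (hN : IsOpen N) (hAN : A ⊆ N) (D : C(I × X, X)) (hD0 : ∀ x, D (0, x) = x)
    (hDA : ∀ a ∈ A, ∀ t, D (t, a) = a) (hDN : ∀ x ∈ N, D (1, x) ∈ A) :
    ContractibleIn (collapseMap X A '' N) := by
  obtain ⟨c, hc⟩ := exists_forall_mem_collapseMap_eq (A := A)
  let incl : C(I × N, I × X) := .prodMap (.id I) ⟨_, continuous_subtype_val⟩
  refine isQuotientMap_collapseMap.contractibleIn_image hN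
    (preimage_image_collapseMap_of_subset hAN) ((collapseMap X A).comp (D.comp incl)) c
    (fun x ↦ congrArg _ (hD0 x)) (fun x ↦ hc _ (hDN x x.2)) ?_
  rintro t x x' hxx'
  rcases collapseMap_eq_iff.mp hxx' with h | ⟨hx, hx'⟩
  · rw [Subtype.ext h]
  · simpa [incl, hDA _ hx, hDA _ hx'] using hxx'

end Collapse

/-- The homotopy extension property for `X × 0 → X × 0 ∪ A × I` gives a retraction `F` of
`X × I` onto `X × 0 ∪ A × I`; take `N := {x | F (x, 1) ∈ A × (0, 1]}`. -/
theorem HEP.exists_deformation_nhds {X : Type} [TopologicalSpace X] {A : Set X} (h : HEP A) :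
    ∃ N, IsOpen N ∧ A ⊆ N ∧ ∃ D : C(I × X, X), (∀ x, D (0, x) = x) ∧
      (∀ a ∈ A, ∀ t, D (t, a) = a) ∧ ∀ x ∈ N, D (1, x) ∈ A := by
  obtain ⟨F, hF0, hFA⟩ := h {p : X × I // p.2 = 0 ∨ p.1 ∈ A}
    ⟨fun x ↦ ⟨(x, 0), .inl rfl⟩, by fun_prop⟩
    ⟨fun p ↦ ⟨(p.1, p.2), .inr p.1.2⟩, by fun_prop⟩ fun _ ↦ rfl
  refine ⟨{x | (F (x, 1)).1.2 ≠ 0}, isOpen_compl_singleton.preimage (by fun_prop),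
    fun a ha ↦ by simp [hFA ⟨a, ha⟩], ⟨fun p ↦ (F (p.2, p.1)).1.1, by fun_prop⟩,
    fun x ↦ by simp [hF0], fun a ha t ↦ by simp [hFA ⟨a, ha⟩ t],
    fun x hx ↦ (F (x, 1)).2.resolve_left hx⟩

theorem LSCatLE.collapse {X : Type} [TopologicalSpace X] {A : Set X} (hA : IsClosed A)
    (hHEP : HEP A) {n : ℕ} (h : LSCatLE X n) : LSCatLE (Collapse X A) (n + 1) := by
  obtain ⟨U, hUo, hUcov, hUc⟩ := h
  have : Nonempty X := ⟨(hUc 0).choose⟩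
  obtain ⟨N, hN, hAN, D, hD0, hDA, hDN⟩ := hHEP.exists_deformation_nhds
  set q := collapseMap X A
  refine ⟨Fin.snoc (fun i ↦ q '' (U i \ A)) (q '' N), ?_, ?_, ?_⟩
  · refine Fin.lastCases ?_ fun i ↦ ?_
    · simpa using isQuotientMap_collapseMap.isOpen_image_of_saturated hN
        (preimage_image_collapseMap_of_subset hAN)
    · simpa using isQuotientMap_collapseMap.isOpen_image_of_saturated ((hUo i).sdiff hA)
        (preimage_image_collapseMap_of_disjoint Set.disjoint_sdiff_left)
  · refine Set.eq_univ_of_forall fun z ↦ ?_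
    obtain ⟨x, rfl⟩ := Quot.exists_rep z
    by_cases hx : x ∈ A
    · exact Set.mem_iUnion.mpr ⟨Fin.last _, by simpa using ⟨x, hAN hx, rfl⟩⟩
    · obtain ⟨i, hi⟩ := Set.mem_iUnion.mp (hUcov ▸ Set.mem_univ x)
      exact Set.mem_iUnion.mpr ⟨i.castSucc, by simpa using ⟨x, ⟨hi, hx⟩, rfl⟩⟩
  · refine Fin.lastCases ?_ fun i ↦ ?_
    · simpa using contractibleIn_collapseMap_image_of_deformation hN hAN D hD0 hDA hDN
    · simpa using contractibleIn_collapseMap_image_diff (hUo i) hA (hUc i)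

theorem LSCat_le_of_LSCatLE {X : Type} [TopologicalSpace X] {n : ℕ} (h : LSCatLE X n) :
    LSCat X ≤ n :=
  sInf_le ⟨n, rfl, h⟩

/-- If `X` is a CW space and `A` a subcomplex, then `cat(X/A) - 1 ≤ cat X`. -/
theorem lscat_collapse_le (X : Type) [TopologicalSpace X] (A : Set X)
    (hA : IsCWSubcomplex X A) :
    LSCat (Collapse X A) - 1 ≤ LSCat X := by
  obtain ⟨-, -, hclosed, hHEP⟩ := hA
  refine le_sInf ?_
  rintro _ ⟨n, rfl, hn⟩
  rw [tsub_le_iff_right]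
  exact_mod_cast LSCat_le_of_LSCatLE (hn.collapse hclosed hHEP)
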